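/- arXiv:math-ph/0311025 — 2 statements merged into one kernel-verified Lean document; each statement's English description precedes it below -/
import Mathlib

section
/- Assume τ is strongly continuous and that the centre of A is trivial, i.e. every element of A that commutes with all elements of A is a complex scalar multiple of the identity. Then an H-equivariant continuous function f ∈ F̂ commutes with every element of F̂ (under the pointwise product) if and only if there exists a continuous function φ : G → ℂ satisfying φ(h·g) = φ(g) for all h ∈ H, g ∈ G, such that f(g) = φ(g)·1 for all g ∈ G. (In other words, the centre of the augmented algebra F̂ = Γ(G ×_H F) is the algebra C(H\G) of continuous scalar functions on the coset space H\G.) -/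
/-!
If `f` is central in `F̂`, then each value `f g` commutes with every `b ∈ A`: the orbit map
`x ↦ τ_x (τ_g⁻¹ b)` is an equivariant function taking the value `b` at `g`. Triviality of the
centre makes `f g` a scalar `φ g • 1`; `φ` is continuous because `c ↦ c • 1` is an isometric
embedding, and `H`-invariant because automorphisms fix scalars. Conversely, scalar-valued
functions commute with everything pointwise.
-/

def IsEquivariant {G A : Type*} [Group G] [TopologicalSpace G]
    [NormedRing A] [StarRing A] [NormedAlgebra ℂ A]
    (τ : G → (A ≃⋆ₐ[ℂ] A)) (H : Subgroup G) (f : G → A) : Prop :=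
  Continuous f ∧ ∀ h ∈ H, ∀ g : G, f (h * g) = τ h (f g)

section Equivariant

variable {G A : Type*} [Group G] [TopologicalSpace G]
    [NormedRing A] [StarRing A] [NormedAlgebra ℂ A]
    {τ : G → (A ≃⋆ₐ[ℂ] A)} (hτ : ∀ g g' : G, τ (g * g') = (τ g').trans (τ g))

include hτ

theorem isEquivariant_orbit {a : A} (ha : Continuous fun g : G => τ g a) (H : Subgroup G) :
    IsEquivariant τ H fun g => τ g a :=
  ⟨ha, fun h _ g => by simp only [hτ]; rfl⟩

theorem commute_apply_of_forall_isEquivariant_commute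
    (hcont : ∀ a : A, Continuous fun g : G => τ g a)
    {H : Subgroup G} {f : G → A}
    (hcomm : ∀ f' : G → A, IsEquivariant τ H f' → f * f' = f' * f)
    (g : G) (b : A) : f g * b = b * f g := by
  have hb : τ g ((τ g).symm b) = b := (τ g).apply_symm_apply b
  simpa [hb] using congrFun (hcomm _ (isEquivariant_orbit hτ (hcont ((τ g).symm b)) H)) g

end Equivariant

/-- The clause on `φ x = φ y` matters when `A` is trivial, where `f x = c • 1` does not
determine `c`. -/
theorem exists_continuous_eq_smul_one {X A : Type*} [TopologicalSpace X] [CStarAlgebra A]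
    {f : X → A} (hf : Continuous f) (hscalar : ∀ x, ∃ c : ℂ, f x = c • (1 : A)) :
    ∃ φ : X → ℂ, Continuous φ ∧ (∀ x, f x = φ x • (1 : A)) ∧
      ∀ x y, f x = f y → φ x = φ y := by
  rcases subsingleton_or_nontrivial A with hA | hA
  · exact ⟨0, continuous_const, fun _ => Subsingleton.elim _ _, fun _ _ _ => rfl⟩
  choose φ hφ using hscalar
  have hcomp : algebraMap ℂ A ∘ φ = f := funext fun x => by
    simp [Algebra.algebraMap_eq_smul_one, ← hφ x]
  refine ⟨φ, ?_, hφ, fun x y hxy => smul_left_injective ℂ (one_ne_zero' A) ?_⟩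
  · rw [(algebraMap_isometry ℂ A).isEmbedding.continuous_iff, hcomp]
    exact hf
  · simpa only [← hφ] using hxy

theorem stmt9_general {G A : Type*} [Group G] [TopologicalSpace G]
    [CStarAlgebra A]
    (τ : G → (A ≃⋆ₐ[ℂ] A))
    (hτ : ∀ g g' : G, τ (g * g') = (τ g').trans (τ g))
    (hcont : ∀ a : A, Continuous fun g : G => τ g a)  -- strong continuity
    -- the centre of A is trivial
    (hcentre : ∀ a : A, (∀ b : A, a * b = b * a) → ∃ c : ℂ, a = c • (1 : A))
    (H : Subgroup G)
    (f : G → A) (hf : IsEquivariant τ H f) :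
    (∀ f' : G → A, IsEquivariant τ H f' → f * f' = f' * f) ↔
    ∃ φ : G → ℂ, Continuous φ ∧ (∀ h ∈ H, ∀ g : G, φ (h * g) = φ g) ∧
      ∀ g : G, f g = φ g • (1 : A) := by
  constructor
  · intro hcomm
    obtain ⟨φ, hφ_cont, hφ, hφ_det⟩ := exists_continuous_eq_smul_one hf.1 fun g =>
      hcentre _ (commute_apply_of_forall_isEquivariant_commute hτ hcont hcomm g)
    refine ⟨φ, hφ_cont, fun h hh g => hφ_det _ _ ?_, hφ⟩
    rw [hf.2 h hh g, hφ g, map_smul, map_one]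
  · rintro ⟨φ, -, -, hφ⟩ f' -
    funext g
    simp [hφ g]

theorem stmt9 {G A : Type*} [Group G] [TopologicalSpace G] [IsTopologicalGroup G]
    [CStarAlgebra A]
    (τ : G → (A ≃⋆ₐ[ℂ] A))
    (hτ : ∀ g g' : G, τ (g * g') = (τ g').trans (τ g))
    (hcont : ∀ a : A, Continuous fun g : G => τ g a)  -- strong continuity
    -- the centre of A is trivial
    (hcentre : ∀ a : A, (∀ b : A, a * b = b * a) → ∃ c : ℂ, a = c • (1 : A))
    (H : Subgroup G)
    (f : G → A) (hf : IsEquivariant τ H f) :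
    (∀ f' : G → A, IsEquivariant τ H f' → f * f' = f' * f) ↔
    ∃ φ : G → ℂ, Continuous φ ∧ (∀ h ∈ H, ∀ g : G, φ (h * g) = φ g) ∧
      ∀ g : G, f g = φ g • (1 : A) :=
  stmt9_general τ hτ hcont hcentre H f hf
end

section
/- Let α : ℝ → Aut⋆(A) be a one-parameter group of ⋆-algebra automorphisms of A such that (t, x) ↦ α_t(x) is continuous, and define on 𝔸̂ = C_b(ℝ>0, A) the lifted time evolution (α̂_t(Â))(μ) := α_{μt}(Â(μ)) and, for λ > 0, the evaluation δ̂_λ(Â) := Â(λ). If a continuous linear functional ω_β on A satisfies the KMS condition at inverse temperature β > 0 with respect to α, then the scale-shifted functional ω_β ∘ δ̂_λ on 𝔸̂ satisfies the KMS condition at inverse temperature β/λ with respect to α̂. (Thus the renormalization-group scale transformation by λ carries a KMS state at inverse temperature β into a KMS state at inverse temperature β/λ.) -/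
open BoundedContinuousFunction

/-!
STATEMENT 15: With the lifted time evolution `(α̂_t Â)(μ) := α_{μt}(Â(μ))` on the
scaling algebra `𝔸̂ = C_b(ℝ>0, A)` and the evaluation `δ̂_λ(Â) := Â(λ)`, if `ω_β`
is a KMS functional at inverse temperature `β` w.r.t. `α`, then `ω_β ∘ δ̂_λ` is a
KMS functional at inverse temperature `β/λ` w.r.t. `α̂`.
-/

/-- The multiplicative group of positive real numbers. -/
abbrev PReal : Type := {x : ℝ // 0 < x}

/-- The KMS condition at inverse temperature `β` for a functional `ω` w.r.t. a
one-parameter family `α` of transformations. -/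
def SatisfiesKMS {A : Type*} [Ring A] (α : ℝ → A → A) (ω : A → ℂ) (β : ℝ) : Prop :=
  ∀ a b : A, ∃ F : ℂ → ℂ,
    ContinuousOn F {z : ℂ | 0 ≤ z.im ∧ z.im ≤ β} ∧
    (∀ z ∈ {z : ℂ | 0 < z.im ∧ z.im < β}, DifferentiableAt ℂ F z) ∧
    (∀ t : ℝ, F t = ω (a * α t b)) ∧
    (∀ t : ℝ, F (t + β * Complex.I) = ω (α t b * a))

theorem stmt15 {A : Type*} [CStarAlgebra A]
    (α : ℝ → (A ≃⋆ₐ[ℂ] A))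
    -- one-parameter group of ⋆-algebra automorphisms
    (hα : ∀ s t : ℝ, ∀ a : A, α (s + t) a = α s (α t a))
    (hα0 : ∀ a : A, α 0 a = a)
    -- joint continuity of (t, x) ↦ α_t(x)
    (hcont : Continuous fun tx : ℝ × A => α tx.1 tx.2)
    (ω : A →L[ℂ] ℂ) (β : ℝ) (hβ : 0 < β) (lam : PReal)
    (hKMS : SatisfiesKMS (fun t => ⇑(α t)) (⇑ω) β) :
    -- the lifted time evolution α̂ is well defined on 𝔸̂ by (α̂_t Â)(μ) = α_{μt}(Â(μ)),
    -- and the scale-shifted functional ω ∘ δ̂_λ is KMS at inverse temperature β/λ w.r.t. α̂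
    ∃ αhat : ℝ → ((PReal →ᵇ A) → (PReal →ᵇ A)),
      (∀ (t : ℝ) (F : PReal →ᵇ A) (μ : PReal), αhat t F μ = α ((μ : ℝ) * t) (F μ)) ∧
      SatisfiesKMS αhat (fun F : PReal →ᵇ A => ω (F lam)) (β / (lam : ℝ)) := by
  have hl : (0:ℝ) < (lam : ℝ) := lam.2
  refine ⟨fun t F => BoundedContinuousFunction.ofNormedAddCommGroup
      (fun μ : PReal => α ((μ : ℝ) * t) (F μ))
      (by
        have : Continuous fun μ : PReal => ((μ : ℝ) * t, F μ) :=
          (continuous_subtype_val.mul continuous_const).prodMk F.continuous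
        exact hcont.comp this)
      ‖F‖ (fun μ => by
        rw [StarAlgEquiv.norm_map]
        exact F.norm_coe_le_norm μ), fun t F μ => rfl, ?_⟩
  intro a b
  obtain ⟨G, hGc, hGd, hG0, hGβ⟩ := hKMS (a lam) (b lam)
  refine ⟨fun z => G ((lam : ℝ) * z), ?_, ?_, ?_, ?_⟩
  · have hmap : Continuous fun z : ℂ => (lam : ℝ) * z := by fun_prop
    apply hGc.comp hmap.continuousOn
    intro z hz
    simp only [Set.mem_setOf_eq] at hz ⊢
    rw [Complex.mul_im]
    simp only [Complex.ofReal_re, Complex.ofReal_im, zero_mul, add_zero]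
    constructor
    · exact mul_nonneg hl.le hz.1
    · calc (lam : ℝ) * z.im ≤ (lam : ℝ) * (β / (lam : ℝ)) := by
            exact mul_le_mul_of_nonneg_left hz.2 hl.le
        _ = β := by field_simp
  · intro z hz
    simp only [Set.mem_setOf_eq] at hz
    have him : ((lam : ℝ) * z : ℂ).im = (lam : ℝ) * z.im := by
      rw [Complex.mul_im]; simp
    have : DifferentiableAt ℂ G ((lam : ℝ) * z) := by
      apply hGd
      simp only [Set.mem_setOf_eq, him]
      constructor
      · exact mul_pos hl hz.1
      · calc (lam : ℝ) * z.im < (lam : ℝ) * (β / (lam : ℝ)) :=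
            (mul_lt_mul_iff_right₀ hl).mpr hz.2
          _ = β := by field_simp
    exact this.comp z (by fun_prop)
  · intro t
    have h1 : ((lam : ℝ) : ℂ) * (t : ℂ) = (((lam : ℝ) * t : ℝ) : ℂ) := by push_cast; ring
    show G (((lam : ℝ) : ℂ) * (t : ℂ)) = _
    rw [h1, hG0]
    rfl
  · intro t
    have hne : (((lam : ℝ) : ℂ)) ≠ 0 := by exact_mod_cast hl.ne'
    have h1 : ((lam : ℝ) : ℂ) * ((t : ℂ) + ((β / (lam : ℝ) : ℝ) : ℂ) * Complex.I)
        = (((lam : ℝ) * t : ℝ) : ℂ) + (β : ℝ) * Complex.I := by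
      push_cast
      field_simp
    show G (((lam : ℝ) : ℂ) * ((t : ℂ) + ((β / (lam : ℝ) : ℝ) : ℂ) * Complex.I)) = _
    rw [h1, hGβ]
    rfl
end
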